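/- arXiv:1601.00962 — 5 statements merged into one kernel-verified Lean document; each statement's English description precedes it below -/
import Mathlib

section
/- For s ∈ [0,1], let M(s) := (1/4)·(I₄ + (1−s)·(σ3 ⊗ₖ I₂) − s·(σ1 ⊗ₖ σ1 − σ2 ⊗ₖ σ2 + σ3 ⊗ₖ σ3)), a 4×4 complex matrix. Then M(s) is Hermitian, its eigenvalues counted with multiplicity are 1/2, s/2, (1−s+√(1−2s+5s²))/4 and (1−s−√(1−2s+5s²))/4, and M(s) has a negative eigenvalue if and only if s > 0. -/
/-! In the ordered basis `|00⟩, |11⟩, |01⟩, |10⟩` the matrix `M(s)` is block diagonal, with blocks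
`!![(1 - s)/2, -s/2; -s/2, 0]` and `!![1/2, 0; 0, s/2]`. The first block has trace `(1 - s)/2` and
determinant `-s²/4`, which gives the eigenvalues `(1 - s ± √(1 - 2s + 5s²))/4`. As
`1 - 2s + 5s² = (1 - s)² + (2s)²`, the square root is at least `|1 - s|`, with equality only at
`s = 0`; so for `s ≥ 0` the only possible negative eigenvalue is `(1 - s - √(1 - 2s + 5s²))/4`,
and it is negative exactly when `s > 0`. -/

open Matrix Polynomial
open scoped Kronecker Matrix ComplexOrder

noncomputable section

/-- Pauli matrix σ1. -/
def σ₁ : Matrix (Fin 2) (Fin 2) ℂ := !![0, 1; 1, 0]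
/-- Pauli matrix σ2. -/
def σ₂ : Matrix (Fin 2) (Fin 2) ℂ := !![0, -Complex.I; Complex.I, 0]
/-- Pauli matrix σ3. -/
def σ₃ : Matrix (Fin 2) (Fin 2) ℂ := !![1, 0; 0, -1]

/-- The three Pauli matrices. -/
def pauli : Fin 3 → Matrix (Fin 2) (Fin 2) ℂ := ![σ₁, σ₂, σ₃]

/-- `v·σ` for a real 3-vector `v`. -/
def pauliVec (v : EuclideanSpace ℝ (Fin 3)) : Matrix (Fin 2) (Fin 2) ℂ :=
  (v 0 : ℂ) • σ₁ + (v 1 : ℂ) • σ₂ + (v 2 : ℂ) • σ₃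

/-- Full correlation `E = Re tr(ρ ((a·σ) ⊗ₖ (b·σ)))`. -/
def corrE (ρ : Matrix (Fin 2 × Fin 2) (Fin 2 × Fin 2) ℂ)
    (a b : EuclideanSpace ℝ (Fin 3)) : ℝ :=
  ((ρ * (pauliVec a ⊗ₖ pauliVec b)).trace).re

/-- Correlation matrix `T i j = Re tr(ρ (σᵢ ⊗ₖ σⱼ))` of a two-qubit state. -/
def corrMatrix (ρ : Matrix (Fin 2 × Fin 2) (Fin 2 × Fin 2) ℂ) : Matrix (Fin 3) (Fin 3) ℝ :=
  fun i j => ((ρ * (pauli i ⊗ₖ pauli j)).trace).re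

/-- The CHSH value `E(1,1) + E(2,1) + E(1,2) − E(2,2)` of `ρ` at `(a1,a2,b1,b2)`. -/
def CHSHval (ρ : Matrix (Fin 2 × Fin 2) (Fin 2 × Fin 2) ℂ)
    (a1 a2 b1 b2 : EuclideanSpace ℝ (Fin 3)) : ℝ :=
  corrE ρ a1 b1 + corrE ρ a2 b1 + corrE ρ a1 b2 - corrE ρ a2 b2

/-- The real inner product on `EuclideanSpace ℝ (Fin 3)`. -/
def rip (x y : EuclideanSpace ℝ (Fin 3)) : ℝ := inner ℝ x y

/-- Action of a real 3×3 matrix on a Euclidean 3-vector. -/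
def matVec (T : Matrix (Fin 3) (Fin 3) ℝ) (v : EuclideanSpace ℝ (Fin 3)) :
    EuclideanSpace ℝ (Fin 3) :=
  (EuclideanSpace.equiv (Fin 3) ℝ).symm (T.mulVec (EuclideanSpace.equiv (Fin 3) ℝ v))

/-- `b1', b2'` is the dual basis of the pair `b1, b2` inside `span{b1, b2}`:
`⟪b'_m, b_n⟫ = δ_{mn}`. -/
def IsDualPair (b1 b2 b1' b2' : EuclideanSpace ℝ (Fin 3)) : Prop :=
  b1' ∈ Submodule.span ℝ ({b1, b2} : Set (EuclideanSpace ℝ (Fin 3))) ∧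
  b2' ∈ Submodule.span ℝ ({b1, b2} : Set (EuclideanSpace ℝ (Fin 3))) ∧
  rip b1' b1 = 1 ∧ rip b1' b2 = 0 ∧ rip b2' b1 = 0 ∧ rip b2' b2 = 1

/-- The analog CHSH value of `ρ` at `(a1,a2,b1,b2)`, with `b1', b2'` the dual basis of
`b1, b2`. -/
def ACHSHval (ρ : Matrix (Fin 2 × Fin 2) (Fin 2 × Fin 2) ℂ)
    (a1 a2 b1 b2 b1' b2' : EuclideanSpace ℝ (Fin 3)) : ℝ :=
  ‖(corrE ρ a1 b1 + corrE ρ a2 b1) • b1' + (corrE ρ a1 b2 + corrE ρ a2 b2) • b2'‖ +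
  ‖(corrE ρ a1 b1 - corrE ρ a2 b1) • b1' + (corrE ρ a1 b2 - corrE ρ a2 b2) • b2'‖

/-- A family `P a m` (outcome `a`, setting `m`) of 2×2 matrices admits a finite
local-hidden-state model. -/
def HasLHSModel (P : Fin 2 → Fin 2 → Matrix (Fin 2) (Fin 2) ℂ) : Prop :=
  ∃ (N : ℕ) (τ : Fin N → Matrix (Fin 2) (Fin 2) ℂ) (q : Fin 2 → Fin 2 → Fin N → ℝ),
    (∀ lam, (τ lam).PosSemidef) ∧
    (∀ a m lam, 0 ≤ q a m lam ∧ q a m lam ≤ 1) ∧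
    (∀ m lam, q 0 m lam + q 1 m lam = 1) ∧
    (∀ a m, P a m = ∑ lam, q a m lam • τ lam)

/-- Full correlations `E m n` admit a finite LHV-LHS model with respect to Bob's
measurement vectors `b 0, b 1`. -/
def HasLHVLHSModel (E : Fin 2 → Fin 2 → ℝ) (b : Fin 2 → EuclideanSpace ℝ (Fin 3)) : Prop :=
  ∃ (N : ℕ) (p : Fin N → ℝ) (e : Fin 2 → Fin N → ℝ)
    (ρs : Fin N → Matrix (Fin 2) (Fin 2) ℂ),
    (∀ lam, 0 ≤ p lam) ∧ (∑ lam, p lam = 1) ∧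
    (∀ m lam, e m lam ∈ Set.Icc (-1 : ℝ) 1) ∧
    (∀ lam, (ρs lam).PosSemidef ∧ (ρs lam).trace = 1) ∧
    (∀ m n, E m n = ∑ lam, p lam * e m lam * ((ρs lam * pauliVec (b n)).trace).re)

/-- Full correlations `E m n` admit a finite LHV model. -/
def HasLHVModel (E : Fin 2 → Fin 2 → ℝ) : Prop :=
  ∃ (N : ℕ) (p : Fin N → ℝ) (e f : Fin 2 → Fin N → ℝ),
    (∀ lam, 0 ≤ p lam) ∧ (∑ lam, p lam = 1) ∧
    (∀ m lam, e m lam ∈ Set.Icc (-1 : ℝ) 1) ∧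
    (∀ n lam, f n lam ∈ Set.Icc (-1 : ℝ) 1) ∧
    (∀ m n, E m n = ∑ lam, p lam * e m lam * f n lam)

/-- The effect `(1/2)(I + (−1)^i v·σ)` of the projective measurement along `v`. -/
def effect (v : EuclideanSpace ℝ (Fin 3)) (i : Fin 2) : Matrix (Fin 2) (Fin 2) ℂ :=
  (1/2 : ℝ) • ((1 : Matrix (Fin 2) (Fin 2) ℂ) + ((-1 : ℝ) ^ (i : ℕ)) • pauliVec v)

theorem Matrix.IsHermitian.kronecker {R m n : Type*} [CommRing R] [StarRing R]
    {A : Matrix m m R} {B : Matrix n n R} (hA : A.IsHermitian) (hB : B.IsHermitian) :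
    (A ⊗ₖ B).IsHermitian := by
  rw [IsHermitian, conjTranspose_kronecker, hA.eq, hB.eq]

theorem isHermitian_σ₁ : σ₁.IsHermitian := by
  ext i j; fin_cases i <;> fin_cases j <;> simp [σ₁]

theorem isHermitian_σ₂ : σ₂.IsHermitian := by
  ext i j; fin_cases i <;> fin_cases j <;> simp [σ₂]

theorem isHermitian_σ₃ : σ₃.IsHermitian := by
  ext i j; fin_cases i <;> fin_cases j <;> simp [σ₃]

theorem Matrix.charpoly_fin_two_eq_mul {R : Type*} [CommRing R] [Nontrivial R]
    (A : Matrix (Fin 2) (Fin 2) R) {a b : R} (hsum : a + b = A.trace) (hprod : a * b = A.det) :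
    A.charpoly = (X - C a) * (X - C b) := by
  rw [charpoly_fin_two, ← hsum, ← hprod, C_add, C_mul]
  ring

def partialTransposeMatrix (s : ℝ) : Matrix (Fin 2 × Fin 2) (Fin 2 × Fin 2) ℂ :=
  (1/4 : ℝ) • ((1 : Matrix (Fin 2 × Fin 2) (Fin 2 × Fin 2) ℂ)
      + (1 - s) • (σ₃ ⊗ₖ (1 : Matrix (Fin 2) (Fin 2) ℂ))
      - s • (σ₁ ⊗ₖ σ₁ - σ₂ ⊗ₖ σ₂ + σ₃ ⊗ₖ σ₃))

theorem isHermitian_partialTransposeMatrix (s : ℝ) : (partialTransposeMatrix s).IsHermitian :=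
  ((isHermitian_one.add (((isHermitian_σ₃.kronecker isHermitian_one).smul (.all (1 - s))))).sub
    ((((isHermitian_σ₁.kronecker isHermitian_σ₁).sub (isHermitian_σ₂.kronecker isHermitian_σ₂)).add
      (isHermitian_σ₃.kronecker isHermitian_σ₃)).smul (.all s))).smul (.all _)

def paritySectors : Fin 2 × Fin 2 ≃ Fin 2 ⊕ Fin 2 where
  toFun p := if p.1 = p.2 then .inl p.1 else .inr p.1
  invFun := Sum.elim (fun i => (i, i)) (fun i => (i, i.rev))
  left_inv := by decide
  right_inv := by decide

theorem reindex_partialTransposeMatrix (s : ℝ) :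
    reindex paritySectors paritySectors (partialTransposeMatrix s) =
      fromBlocks !![(1 - s : ℂ) / 2, -s / 2; -s / 2, 0] 0 0 !![1 / 2, 0; 0, (s : ℂ) / 2] := by
  ext (i | i) (j | j) <;> fin_cases i <;> fin_cases j <;>
    simp [paritySectors, partialTransposeMatrix, σ₁, σ₂, σ₃, one_apply] <;> ring

theorem abs_one_sub_le_sqrt (s : ℝ) : |1 - s| ≤ √(1 - 2*s + 5*s^2) :=
  Real.abs_le_sqrt (by nlinarith)

theorem one_sub_lt_sqrt_iff (s : ℝ) : 1 - s < √(1 - 2*s + 5*s^2) ↔ s ≠ 0 := by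
  rcases lt_or_ge (1 - s) 0 with hneg | hnonneg
  · exact ⟨fun _ => by rintro rfl; norm_num at hneg,
      fun _ => hneg.trans_le (Real.sqrt_nonneg _)⟩
  · rw [Real.lt_sqrt hnonneg]
    constructor
    · rintro h rfl; norm_num at h
    · intro hs; nlinarith [sq_pos_of_ne_zero hs]

theorem charpoly_partialTransposeMatrix (s : ℝ) :
    (partialTransposeMatrix s).charpoly = (X - C ((1/2 : ℝ) : ℂ)) * (X - C ((s/2 : ℝ) : ℂ))
      * (X - C (((1 - s + √(1 - 2*s + 5*s^2))/4 : ℝ) : ℂ))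
      * (X - C (((1 - s - √(1 - 2*s + 5*s^2))/4 : ℝ) : ℂ)) := by
  set r := √(1 - 2*s + 5*s^2)
  have hr : (r : ℂ) ^ 2 = 1 - 2*s + 5*s^2 := by
    exact_mod_cast Real.sq_sqrt (by nlinarith : 0 ≤ 1 - 2*s + 5*s^2)
  have hA := Matrix.charpoly_fin_two_eq_mul !![(1 - s : ℂ) / 2, -s / 2; -s / 2, 0]
    (a := ((1 - s + r) / 4 : ℝ)) (b := ((1 - s - r) / 4 : ℝ))
    (by simp [trace_fin_two]; ring) (by simp [det_fin_two]; linear_combination -hr / 16)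
  have hD := Matrix.charpoly_fin_two_eq_mul !![1 / 2, 0; 0, (s : ℂ) / 2]
    (a := ((1 / 2 : ℝ) : ℂ)) (b := ((s / 2 : ℝ) : ℂ))
    (by simp [trace_fin_two]) (by simp [det_fin_two])
  rw [← charpoly_reindex paritySectors, reindex_partialTransposeMatrix, charpoly_fromBlocks_zero₁₂,
    hA, hD]
  ring

theorem partial_transpose_eigenvalues_general (s : ℝ) (hs0 : 0 ≤ s)
    (M : Matrix (Fin 2 × Fin 2) (Fin 2 × Fin 2) ℂ)
    (hM : M = (1/4 : ℝ) • ((1 : Matrix (Fin 2 × Fin 2) (Fin 2 × Fin 2) ℂ)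
      + (1 - s) • (σ₃ ⊗ₖ (1 : Matrix (Fin 2) (Fin 2) ℂ))
      - s • (σ₁ ⊗ₖ σ₁ - σ₂ ⊗ₖ σ₂ + σ₃ ⊗ₖ σ₃))) :
    M.IsHermitian ∧
    M.charpoly = (X - C ((1/2 : ℝ) : ℂ)) * (X - C ((s/2 : ℝ) : ℂ))
      * (X - C (((1 - s + Real.sqrt (1 - 2*s + 5*s^2))/4 : ℝ) : ℂ))
      * (X - C (((1 - s - Real.sqrt (1 - 2*s + 5*s^2))/4 : ℝ) : ℂ)) ∧
    ((∃ μ : ℝ, μ < 0 ∧ M.charpoly.IsRoot (μ : ℂ)) ↔ 0 < s) := by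
  obtain rfl : M = partialTransposeMatrix s := hM
  refine ⟨isHermitian_partialTransposeMatrix s, charpoly_partialTransposeMatrix s, ?_⟩
  have hle := abs_one_sub_le_sqrt s
  have hlt := one_sub_lt_sqrt_iff s
  simp only [charpoly_partialTransposeMatrix, IsRoot, eval_mul, eval_sub, eval_X, eval_C,
    mul_eq_zero, sub_eq_zero, Complex.ofReal_inj]
  constructor
  · rintro ⟨μ, hμ, ((rfl | rfl) | rfl) | rfl⟩
    · norm_num at hμ
    · linarith
    · linarith [neg_abs_le (1 - s)]
    · exact hs0.lt_of_ne' (hlt.mp (by linarith))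
  · intro hs
    exact ⟨_, by linarith [hlt.mpr hs.ne'], Or.inr rfl⟩

/-- the partial transpose
`M(s) = (1/4)(I₄ + (1−s) σ3⊗I₂ − s(σ1⊗σ1 − σ2⊗σ2 + σ3⊗σ3))` is Hermitian, has eigenvalues
(with multiplicity) `1/2, s/2, (1−s±√(1−2s+5s²))/4`, and has a negative eigenvalue iff
`s > 0`. -/
theorem partial_transpose_eigenvalues (s : ℝ) (hs0 : 0 ≤ s) (hs1 : s ≤ 1)
    (M : Matrix (Fin 2 × Fin 2) (Fin 2 × Fin 2) ℂ)
    (hM : M = (1/4 : ℝ) • ((1 : Matrix (Fin 2 × Fin 2) (Fin 2 × Fin 2) ℂ)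
      + (1 - s) • (σ₃ ⊗ₖ (1 : Matrix (Fin 2) (Fin 2) ℂ))
      - s • (σ₁ ⊗ₖ σ₁ - σ₂ ⊗ₖ σ₂ + σ₃ ⊗ₖ σ₃))) :
    M.IsHermitian ∧
    M.charpoly = (X - C ((1/2 : ℝ) : ℂ)) * (X - C ((s/2 : ℝ) : ℂ))
      * (X - C (((1 - s + Real.sqrt (1 - 2*s + 5*s^2))/4 : ℝ) : ℂ))
      * (X - C (((1 - s - Real.sqrt (1 - 2*s + 5*s^2))/4 : ℝ) : ℂ)) ∧
    ((∃ μ : ℝ, μ < 0 ∧ M.charpoly.IsRoot (μ : ℂ)) ↔ 0 < s) :=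
  partial_transpose_eigenvalues_general s hs0 M hM

end
end

section
/- For s ∈ ((√5−1)/2, 1], the family of 2×2 complex matrices ρ(0,1) = (1/4)·(I − s·σ1), ρ(1,1) = (1/4)·(I + s·σ1), ρ(0,2) = (1/4)·((2−s)·I − s·σ3), ρ(1,2) = (1/4)·(s·I + s·σ3) admits no finite LHS model. -/
open Matrix Polynomial
open scoped Kronecker Matrix ComplexOrder

noncomputable section

/-!
Write `A λ`, `D λ`, `X λ` for the real parts of the `(0,0)`, `(1,1)`, `(0,1)` entries of the
hidden state `σ(λ)` (the paper's measurements `m = 1, 2` are `m = 0, 1` in the code). The `(1,1)` entry of `ρ(1,2)` vanishes, so every hidden state with `D λ > 0`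
gives outcome `0` to the second measurement; these states therefore carry total `A`-weight at
most `ρ(0,2)₀₀ = (1 - s)/2`, while their total `D`-weight is `1/2`. Positivity gives
`X λ ² ≤ A λ D λ`, so only these states contribute to the coherence
`s/2 = (ρ(1,1) - ρ(0,1))₀₁ = Σ (q(1,1,λ) - q(0,1,λ)) X λ`, and Cauchy–Schwarz bounds it:
`(s/2)² ≤ (1 - s)/2 · 1/2`, i.e. `s² + s ≤ 1`, which fails for `s > (√5 - 1)/2`.
-/

theorem Matrix.PosSemidef.re_apply_self_nonneg {n : Type*} {A : Matrix n n ℂ}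
    (hA : A.PosSemidef) (i : n) : 0 ≤ (A i i).re :=
  (Complex.nonneg_iff.1 hA.diag_nonneg).1

theorem Matrix.PosSemidef.re_apply_sq_le_mul {n : Type*} {A : Matrix n n ℂ} (hA : A.PosSemidef)
    (i j : n) : (A i j).re ^ 2 ≤ (A i i).re * (A j j).re := by
  have hminor := (Complex.nonneg_iff.1 (hA.submatrix ![i, j]).det_nonneg).1
  have hii := (Complex.nonneg_iff.1 (hA.diag_nonneg (i := i))).2
  have hjj := (Complex.nonneg_iff.1 (hA.diag_nonneg (i := j))).2
  simp only [det_fin_two, submatrix_apply, cons_val_zero, cons_val_one,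
    ← hA.isHermitian.apply j i, Complex.sub_re, Complex.mul_re, RCLike.star_def,
    Complex.conj_re, Complex.conj_im, ← hii, ← hjj] at hminor
  nlinarith [sq_nonneg (A i j).im]

theorem Matrix.re_sum_smul_apply {ι n : Type*} (s : Finset ι) (c : ι → ℝ)
    (τ : ι → Matrix n n ℂ) (i j : n) :
    ((∑ l ∈ s, c l • τ l) i j).re = ∑ l ∈ s, c l * (τ l i j).re := by
  simp [Matrix.sum_apply, Complex.re_sum]

theorem Finset.sq_sum_mul_le_of_sum_mul_eq_zero {ι : Type*} (s : Finset ι)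
    {A D X α w : ι → ℝ} (hA : ∀ i ∈ s, 0 ≤ A i) (hD : ∀ i ∈ s, 0 ≤ D i)
    (hX : ∀ i ∈ s, X i ^ 2 ≤ A i * D i) (hα : ∀ i ∈ s, |α i| ≤ 1)
    (hw : ∀ i ∈ s, 0 ≤ w i ∧ w i ≤ 1) (hwD : ∑ i ∈ s, w i * D i = 0) :
    (∑ i ∈ s, α i * X i) ^ 2 ≤ (∑ i ∈ s, (1 - w i) * A i) * ∑ i ∈ s, D i := by
  have hwD' : ∀ i ∈ s, w i * D i = 0 :=
    (sum_eq_zero_iff_of_nonneg fun i hi => mul_nonneg (hw i hi).1 (hD i hi)).1 hwD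
  refine sum_sq_le_sum_mul_sum_of_sq_le_mul s
    (fun i hi => mul_nonneg (by linarith [(hw i hi).2]) (hA i hi)) hD fun i hi => ?_
  calc (α i * X i) ^ 2 = |α i| ^ 2 * X i ^ 2 := by rw [mul_pow, sq_abs]
    _ ≤ 1 * (A i * D i) := by
      gcongr
      · exact pow_le_one₀ (abs_nonneg _) (hα i hi)
      · exact hX i hi
    _ = (1 - w i) * A i * D i := by linear_combination A i * hwD' i hi

theorem assemblage_steerable_general (s : ℝ) (hs : (Real.sqrt 5 - 1)/2 < s)
    (P : Fin 2 → Fin 2 → Matrix (Fin 2) (Fin 2) ℂ)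
    (h00 : P 0 0 = (1/4 : ℝ) • ((1 : Matrix (Fin 2) (Fin 2) ℂ) - s • σ₁))
    (h10 : P 1 0 = (1/4 : ℝ) • ((1 : Matrix (Fin 2) (Fin 2) ℂ) + s • σ₁))
    (h01 : P 0 1 = (1/4 : ℝ) • ((2 - s) • (1 : Matrix (Fin 2) (Fin 2) ℂ) - s • σ₃))
    (h11 : P 1 1 = (1/4 : ℝ) • (s • (1 : Matrix (Fin 2) (Fin 2) ℂ) + s • σ₃)) :
    ¬ HasLHSModel P := by
  rintro ⟨N, τ, q, hτ, hq, hqsum, hP⟩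
  have entry (a m i j : Fin 2) : ∑ l, q a m l * (τ l i j).re = (P a m i j).re := by
    rw [hP, re_sum_smul_apply]
  have hX : ∑ l, (q 1 0 l - q 0 0 l) * (τ l 0 1).re = s / 2 := by
    simp only [sub_mul, Finset.sum_sub_distrib, entry, h10, h00]
    norm_num [σ₁]
    ring
  have hwD : ∑ l, q 1 1 l * (τ l 1 1).re = 0 := by
    simp [entry, h11, σ₃]
  have hA : ∑ l, (1 - q 1 1 l) * (τ l 0 0).re = (1 - s) / 2 := by
    have hq01 (l : Fin N) : 1 - q 1 1 l = q 0 1 l := by linarith [hqsum 1 l]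
    simp only [hq01, entry, h01]
    norm_num [σ₃]
    ring
  have hD : ∑ l, (τ l 1 1).re = 1 / 2 := by
    calc ∑ l, (τ l 1 1).re = ∑ l, (q 0 1 l * (τ l 1 1).re + q 1 1 l * (τ l 1 1).re) := by
          simp only [← add_mul, hqsum 1, one_mul]
      _ = 1 / 2 := by
          simp only [Finset.sum_add_distrib, entry, h01, h11]
          norm_num [σ₃]
  have hα (l : Fin N) : |q 1 0 l - q 0 0 l| ≤ 1 :=
    abs_sub_le_iff.2 ⟨by linarith [(hq 1 0 l).2, (hq 0 0 l).1],
      by linarith [(hq 1 0 l).1, (hq 0 0 l).2]⟩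
  have key := Finset.univ.sq_sum_mul_le_of_sum_mul_eq_zero
    (fun l _ => (hτ l).re_apply_self_nonneg 0) (fun l _ => (hτ l).re_apply_self_nonneg 1)
    (fun l _ => (hτ l).re_apply_sq_le_mul 0 1) (fun l _ => hα l) (fun l _ => hq 1 1 l) hwD
  rw [hX, hA, hD] at key
  have h5 : Real.sqrt 5 ^ 2 = 5 := Real.sq_sqrt (by norm_num)
  have h1 : 1 ≤ Real.sqrt 5 := Real.one_le_sqrt.2 (by norm_num)
  nlinarith [mul_pos (sub_pos.2 hs) (by linarith : 0 < s + (Real.sqrt 5 - 1) / 2 + 1)]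

/-- for `s ∈ ((√5−1)/2, 1]`, the assemblage
`ρ(0,1) = (1/4)(I − s σ1)`, `ρ(1,1) = (1/4)(I + s σ1)`,
`ρ(0,2) = (1/4)((2−s) I − s σ3)`, `ρ(1,2) = (1/4)(s I + s σ3)`
admits no finite LHS model. -/
theorem assemblage_steerable (s : ℝ) (hs : (Real.sqrt 5 - 1)/2 < s) (hs1 : s ≤ 1)
    (P : Fin 2 → Fin 2 → Matrix (Fin 2) (Fin 2) ℂ)
    (h00 : P 0 0 = (1/4 : ℝ) • ((1 : Matrix (Fin 2) (Fin 2) ℂ) - s • σ₁))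
    (h10 : P 1 0 = (1/4 : ℝ) • ((1 : Matrix (Fin 2) (Fin 2) ℂ) + s • σ₁))
    (h01 : P 0 1 = (1/4 : ℝ) • ((2 - s) • (1 : Matrix (Fin 2) (Fin 2) ℂ) - s • σ₃))
    (h11 : P 1 1 = (1/4 : ℝ) • (s • (1 : Matrix (Fin 2) (Fin 2) ℂ) + s • σ₃)) :
    ¬ HasLHSModel P :=
  assemblage_steerable_general s hs P h00 h10 h01 h11

end
end

section
/- For p ∈ (1/√2, 1] and θ ∈ ℝ with sin(2θ) ≠ 0, the family of 2×2 complex matrices ρ(0,1) = (1/4)·(I + cos(2θ)·σ3 + p·sin(2θ)·σ1), ρ(1,1) = (1/4)·(I + cos(2θ)·σ3 − p·sin(2θ)·σ1), ρ(0,2) = (1/4)·((1 + p·cos(2θ))·I + (cos(2θ) + p)·σ3), ρ(1,2) = (1/4)·((1 − p·cos(2θ))·I + (cos(2θ) − p)·σ3) admits no finite LHS model. -/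
open Matrix Polynomial
open scoped Kronecker Matrix ComplexOrder

noncomputable section

/-!
An LHS model is ruled out by a steering witness: matrices `W a m` with `W a 0 + W b 1 ⪰ 0` for
every deterministic response `(a, b)`. Every response function of an LHS model is a mixture of
deterministic ones, so `∑ Re tr (W a m * P a m) ≥ 0` for any assemblage with an LHS model.

With `s = sin 2θ`, `k = cos 2θ` and `n₁,₂ = √((p s)² + (k ± p)²)`, take `W a 0 = ∓ p s σ₁`,
`W 0 1 = n₁ I - (k + p) σ₃`, `W 1 1 = n₂ I - (k - p) σ₃`. Since `n I + x σ₁ + z σ₃ ⪰ 0` as soon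
as `x² + z² ≤ n²`, this is a witness, and its value on the given assemblage is
`(n₁ (1 + p k - n₁) + n₂ (1 - p k - n₂)) / 2`. It is negative because `(1 ± p k)² < n₁,₂²`,
which reduces to `sin² 2θ (2 p² - 1) > 0`.
-/

open scoped MatrixOrder in
theorem Matrix.PosSemidef.trace_mul_nonneg {n 𝕜 : Type*} [Fintype n] [DecidableEq n] [RCLike 𝕜]
    {A B : Matrix n n 𝕜} (hA : A.PosSemidef) (hB : B.PosSemidef) : 0 ≤ (A * B).trace := by
  obtain ⟨S, rfl⟩ := CStarAlgebra.nonneg_iff_eq_star_mul_self.mp hA.nonneg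
  rw [star_eq_conjTranspose, Matrix.mul_assoc, Matrix.trace_mul_comm]
  exact (hB.mul_mul_conjTranspose_same S).trace_nonneg

theorem Finset.sum_mul_add_sum_mul_eq_sum_sum {ι κ R : Type*} [Fintype ι] [Fintype κ]
    [CommSemiring R] {x : ι → R} {y : κ → R} (hx : ∑ i, x i = 1) (hy : ∑ j, y j = 1)
    (f : ι → R) (g : κ → R) :
    ∑ i, x i * f i + ∑ j, y j * g j = ∑ i, ∑ j, x i * y j * (f i + g j) := by
  simp only [mul_add, Finset.sum_add_distrib]
  congr 1
  · simp_rw [mul_right_comm _ (y _), ← Finset.mul_sum, hy, mul_one]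
  · rw [Finset.sum_comm]
    simp_rw [mul_assoc, ← Finset.sum_mul, hx, one_mul]

theorem HasLHSModel.sum_re_trace_mul_nonneg {P : Fin 2 → Fin 2 → Matrix (Fin 2) (Fin 2) ℂ}
    (hP : HasLHSModel P) (W : Fin 2 → Fin 2 → Matrix (Fin 2) (Fin 2) ℂ)
    (hW : ∀ a b, (W a 0 + W b 1).PosSemidef) :
    0 ≤ ∑ a, ∑ m, (W a m * P a m).trace.re := by
  obtain ⟨N, τ, q, hτ, hq, hqsum, hPq⟩ := hP
  set f : Fin 2 → Fin 2 → Fin N → ℝ := fun a m l => (W a m * τ l).trace.re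
  have hf : ∀ a b l, 0 ≤ f a 0 l + f b 1 l := fun a b l => by
    simp only [f]
    rw [← Complex.add_re, ← Matrix.trace_add, ← Matrix.add_mul]
    exact (Complex.nonneg_iff.mp ((hW a b).trace_mul_nonneg (hτ l))).1
  have hq1 : ∀ m l, ∑ a, q a m l = 1 := fun m l => by rw [Fin.sum_univ_two, hqsum]
  calc 0 ≤ ∑ l, ∑ a, ∑ b, q a 0 l * q b 1 l * (f a 0 l + f b 1 l) :=
        Finset.sum_nonneg fun l _ => Finset.sum_nonneg fun a _ => Finset.sum_nonneg fun b _ =>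
          mul_nonneg (mul_nonneg (hq a 0 l).1 (hq b 1 l).1) (hf a b l)
    _ = ∑ l, ∑ m, ∑ a, q a m l * f a m l := by
        simp_rw [Fin.sum_univ_two (f := fun m => ∑ a, q a m _ * f a m _),
          Finset.sum_mul_add_sum_mul_eq_sum_sum (hq1 0 _) (hq1 1 _)]
    _ = ∑ a, ∑ m, (W a m * P a m).trace.re := by
        simp only [f, hPq, Matrix.mul_sum, Matrix.mul_smul, Matrix.trace_sum, Matrix.trace_smul,
          Complex.re_sum, Complex.smul_re, smul_eq_mul]
        exact (Finset.sum_congr rfl fun _ _ => Finset.sum_comm).trans Finset.sum_comm_cycle.symm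

theorem quadratic_nonneg_of_sq_add_sq_le {n u v : ℝ} (hn : 0 ≤ n) (huv : u ^ 2 + v ^ 2 ≤ n ^ 2)
    (a c : ℝ) : 0 ≤ (n + v) * a ^ 2 + 2 * u * a * c + (n - v) * c ^ 2 := by
  rcases hn.eq_or_lt with rfl | hn
  · obtain rfl : u = 0 := by nlinarith
    obtain rfl : v = 0 := by nlinarith
    simp
  · refine nonneg_of_mul_nonneg_right ?_ (by positivity : 0 < 2 * n)
    nlinarith [sq_nonneg ((n + v) * a + u * c), sq_nonneg ((n - v) * c + u * a),
      mul_nonneg (sub_nonneg.2 huv) (sq_nonneg c), mul_nonneg (sub_nonneg.2 huv) (sq_nonneg a)]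

def xzMatrix (t x z : ℝ) : Matrix (Fin 2) (Fin 2) ℂ := t • 1 + x • σ₁ + z • σ₃

theorem xzMatrix_eq (t x z : ℝ) : xzMatrix t x z = !![(t + z : ℂ), x; x, t - z] := by
  ext i j
  fin_cases i <;> fin_cases j <;> simp [xzMatrix, σ₁, σ₃, sub_eq_add_neg]

theorem xzMatrix_add (t x z t' x' z' : ℝ) :
    xzMatrix t x z + xzMatrix t' x' z' = xzMatrix (t + t') (x + x') (z + z') := by
  simp only [xzMatrix, add_smul]
  abel

theorem re_trace_xzMatrix_mul (t x z t' x' z' : ℝ) :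
    (xzMatrix t x z * xzMatrix t' x' z').trace.re = 2 * (t * t' + x * x' + z * z') := by
  rw [xzMatrix_eq, xzMatrix_eq, Matrix.mul_fin_two, Matrix.trace_fin_two_of]
  simp only [Complex.add_re, Complex.add_im, Complex.sub_re, Complex.sub_im, Complex.mul_re,
    Complex.ofReal_re, Complex.ofReal_im]
  ring

theorem posSemidef_xzMatrix {t x z : ℝ} (ht : 0 ≤ t) (hxz : x ^ 2 + z ^ 2 ≤ t ^ 2) :
    (xzMatrix t x z).PosSemidef := by
  refine posSemidef_iff_dotProduct_mulVec.mpr ⟨?_, fun v => ?_⟩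
  · ext i j
    fin_cases i <;> fin_cases j <;> simp [xzMatrix_eq]
  · have hre := quadratic_nonneg_of_sq_add_sq_le ht hxz (v 0).re (v 1).re
    have him := quadratic_nonneg_of_sq_add_sq_le ht hxz (v 0).im (v 1).im
    rw [Complex.nonneg_iff]
    simp only [xzMatrix_eq, Matrix.vec2_dotProduct, Matrix.mulVec_fin_two, Pi.star_apply,
      RCLike.star_def, Matrix.of_apply, Matrix.cons_val', Matrix.cons_val_zero, Matrix.cons_val_one,
      Matrix.cons_val_fin_one, Complex.add_re, Complex.add_im, Complex.sub_re, Complex.sub_im,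
      Complex.mul_re, Complex.mul_im, Complex.conj_re, Complex.conj_im, Complex.ofReal_re,
      Complex.ofReal_im]
    constructor
    · nlinarith
    · ring

def xzWitness (x : ℝ) (n z : Fin 2 → ℝ) : Fin 2 → Fin 2 → Matrix (Fin 2) (Fin 2) ℂ :=
  fun a => ![xzMatrix 0 (![-x, x] a) 0, xzMatrix (n a) 0 (z a)]

theorem posSemidef_xzWitness_add {x : ℝ} {n z : Fin 2 → ℝ} (hn : ∀ b, 0 ≤ n b)
    (hnz : ∀ b, n b ^ 2 = x ^ 2 + z b ^ 2) (a b : Fin 2) :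
    (xzWitness x n z a 0 + xzWitness x n z b 1).PosSemidef := by
  have hx : ![-x, x] a ^ 2 = x ^ 2 := by fin_cases a <;> simp
  simp only [xzWitness, Matrix.cons_val_zero, Matrix.cons_val_one, xzMatrix_add, zero_add,
    add_zero]
  exact posSemidef_xzMatrix (hn b) (by rw [hx, hnz])

def xzAssemblage (p s k : ℝ) : Fin 2 → Fin 2 → Matrix (Fin 2) (Fin 2) ℂ :=
  ![![xzMatrix (1 / 4) (p * s / 4) (k / 4), xzMatrix ((1 + p * k) / 4) 0 ((k + p) / 4)],
    ![xzMatrix (1 / 4) (-(p * s) / 4) (k / 4), xzMatrix ((1 - p * k) / 4) 0 ((k - p) / 4)]]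

theorem one_add_mul_lt_sqrt {p s c : ℝ} (hp : 1 / 2 < p ^ 2) (hs : s ≠ 0)
    (hsc : s ^ 2 + c ^ 2 = 1) : 1 + p * c < √((p * s) ^ 2 + (c + p) ^ 2) := by
  apply Real.lt_sqrt_of_sq_lt
  have : 0 < s ^ 2 * (2 * p ^ 2 - 1) := mul_pos (by positivity) (by linarith)
  linear_combination this + (p ^ 2 - 1) * hsc

theorem not_hasLHSModel_xzAssemblage {p s k : ℝ} (hp : 1 / 2 < p ^ 2) (hs : s ≠ 0)
    (hsk : s ^ 2 + k ^ 2 = 1) : ¬ HasLHSModel (xzAssemblage p s k) := by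
  intro hP
  have hp0 : p ≠ 0 := by rintro rfl; norm_num at hp
  set n₁ := √((p * s) ^ 2 + (k + p) ^ 2)
  set n₂ := √((p * s) ^ 2 + (k - p) ^ 2)
  have hn₁sq : n₁ ^ 2 = (p * s) ^ 2 + (k + p) ^ 2 := Real.sq_sqrt (by positivity)
  have hn₂sq : n₂ ^ 2 = (p * s) ^ 2 + (k - p) ^ 2 := Real.sq_sqrt (by positivity)
  have hn₁ : 1 + p * k < n₁ := one_add_mul_lt_sqrt hp hs hsk
  have hn₂ : 1 - p * k < n₂ := by
    convert one_add_mul_lt_sqrt hp hs (c := -k) (by rw [neg_sq, hsk]) using 3 <;> ring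
  have hW := posSemidef_xzWitness_add (x := p * s) (n := ![n₁, n₂]) (z := ![-(k + p), -(k - p)])
    (by simp [Fin.forall_fin_two, n₁, n₂])
    (by simp only [Fin.forall_fin_two, Matrix.cons_val_zero, Matrix.cons_val_one,
      Matrix.cons_val_fin_one, neg_sq, hn₁sq, hn₂sq, and_self])
  have hWP : ∑ a, ∑ m, (xzWitness (p * s) ![n₁, n₂] ![-(k + p), -(k - p)] a m *
      xzAssemblage p s k a m).trace.re = (n₁ * (1 + p * k - n₁) + n₂ * (1 - p * k - n₂)) / 2 := by
    simp only [Fin.sum_univ_two, xzWitness, xzAssemblage, Matrix.cons_val_zero,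
      Matrix.cons_val_one, re_trace_xzMatrix_mul]
    linear_combination (1 / 2 : ℝ) * (hn₁sq + hn₂sq)
  have h₁ : n₁ * (1 + p * k - n₁) < 0 :=
    mul_neg_of_pos_of_neg (Real.sqrt_pos.mpr (by positivity)) (by linarith)
  have h₂ : n₂ * (1 - p * k - n₂) ≤ 0 :=
    mul_nonpos_of_nonneg_of_nonpos (Real.sqrt_nonneg _) (by linarith)
  linarith [hP.sum_re_trace_mul_nonneg _ hW]

theorem one_way_steerable_general (p θ : ℝ) (hp : 1 / Real.sqrt 2 < p)
    (hθ : Real.sin (2*θ) ≠ 0)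
    (P : Fin 2 → Fin 2 → Matrix (Fin 2) (Fin 2) ℂ)
    (h00 : P 0 0 = (1/4 : ℝ) • ((1 : Matrix (Fin 2) (Fin 2) ℂ)
      + Real.cos (2*θ) • σ₃ + (p * Real.sin (2*θ)) • σ₁))
    (h10 : P 1 0 = (1/4 : ℝ) • ((1 : Matrix (Fin 2) (Fin 2) ℂ)
      + Real.cos (2*θ) • σ₃ - (p * Real.sin (2*θ)) • σ₁))
    (h01 : P 0 1 = (1/4 : ℝ) • ((1 + p * Real.cos (2*θ)) • (1 : Matrix (Fin 2) (Fin 2) ℂ)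
      + (Real.cos (2*θ) + p) • σ₃))
    (h11 : P 1 1 = (1/4 : ℝ) • ((1 - p * Real.cos (2*θ)) • (1 : Matrix (Fin 2) (Fin 2) ℂ)
      + (Real.cos (2*θ) - p) • σ₃)) :
    ¬ HasLHSModel P := by
  have hp2 : 1 / 2 < p ^ 2 := by
    have := pow_lt_pow_left₀ hp (by positivity) two_ne_zero
    rwa [div_pow, one_pow, Real.sq_sqrt zero_le_two] at this
  have hP : P = xzAssemblage p (Real.sin (2*θ)) (Real.cos (2*θ)) := by
    ext1 a; ext1 m
    fin_cases a <;> fin_cases m <;>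
      simp only [xzAssemblage, Fin.zero_eta, Fin.mk_one, Matrix.cons_val_zero, Matrix.cons_val_one,
        h00, h01, h10, h11, xzMatrix] <;> module
  exact hP ▸ not_hasLHSModel_xzAssemblage hp2 hθ (Real.sin_sq_add_cos_sq _)

/-- for `p ∈ (1/√2, 1]` and `sin 2θ ≠ 0`, the assemblage
`ρ(0,1) = (1/4)(I + cos 2θ σ3 + p sin 2θ σ1)`, `ρ(1,1) = (1/4)(I + cos 2θ σ3 − p sin 2θ σ1)`,
`ρ(0,2) = (1/4)((1 + p cos 2θ) I + (cos 2θ + p) σ3)`,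
`ρ(1,2) = (1/4)((1 − p cos 2θ) I + (cos 2θ − p) σ3)` admits no finite LHS model. -/
theorem one_way_steerable (p θ : ℝ) (hp : 1 / Real.sqrt 2 < p) (hp1 : p ≤ 1)
    (hθ : Real.sin (2*θ) ≠ 0)
    (P : Fin 2 → Fin 2 → Matrix (Fin 2) (Fin 2) ℂ)
    (h00 : P 0 0 = (1/4 : ℝ) • ((1 : Matrix (Fin 2) (Fin 2) ℂ)
      + Real.cos (2*θ) • σ₃ + (p * Real.sin (2*θ)) • σ₁))
    (h10 : P 1 0 = (1/4 : ℝ) • ((1 : Matrix (Fin 2) (Fin 2) ℂ)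
      + Real.cos (2*θ) • σ₃ - (p * Real.sin (2*θ)) • σ₁))
    (h01 : P 0 1 = (1/4 : ℝ) • ((1 + p * Real.cos (2*θ)) • (1 : Matrix (Fin 2) (Fin 2) ℂ)
      + (Real.cos (2*θ) + p) • σ₃))
    (h11 : P 1 1 = (1/4 : ℝ) • ((1 - p * Real.cos (2*θ)) • (1 : Matrix (Fin 2) (Fin 2) ℂ)
      + (Real.cos (2*θ) - p) • σ₃)) :
    ¬ HasLHSModel P :=
  one_way_steerable_general p θ hp hθ P h00 h10 h01 h11

end
end

section
/- For p ∈ [0,1] and θ ∈ ℝ, let ρ(p,θ) := (1/4)·(I₄ + p·cos(2θ)·(σ3 ⊗ₖ I₂) + cos(2θ)·(I₂ ⊗ₖ σ3) + p·sin(2θ)·(σ1 ⊗ₖ σ1) − p·sin(2θ)·(σ2 ⊗ₖ σ2) + p·(σ3 ⊗ₖ σ3)). Then there exist unit vectors a1, a2, b1, b2 in EuclideanSpace ℝ (Fin 3) whose CHSH value for ρ(p,θ) exceeds 2 if and only if p²·(1 + sin²(2θ)) > 1. -/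
open Matrix Polynomial
open scoped Kronecker Matrix ComplexOrder

noncomputable section

/-!
The CHSH value is bilinear in the measurement vectors: with `T` the correlation matrix of `ρ`,
`CHSH = ⟪a1, T (b1 + b2)⟫ + ⟪a2, T (b1 - b2)⟫ ≤ ‖T (b1 + b2)‖ + ‖T (b1 - b2)‖`.
For `ρ(p,θ)` one computes `T = diag(s, -s, t)` with `s = p sin 2θ`, `t = p`, so `s² ≤ t²`.
Since `b1 ± b2` are orthogonal with `‖b1 + b2‖² + ‖b1 - b2‖² = 4`, Cauchy–Schwarz and Bessel's
inequality bound the right-hand side by `2 √(s² + t²)` (Horodecki's criterion), and this value is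
attained by measuring `b1 ± b2` along the axes of the two largest singular values `s` and `t`.
Hence the CHSH inequality can be violated iff `s² + t² = p² (1 + sin² 2θ) > 1`.
-/

def oneWayState (p θ : ℝ) : Matrix (Fin 2 × Fin 2) (Fin 2 × Fin 2) ℂ :=
  (1/4 : ℝ) • ((1 : Matrix (Fin 2 × Fin 2) (Fin 2 × Fin 2) ℂ)
      + (p * Real.cos (2*θ)) • (σ₃ ⊗ₖ (1 : Matrix (Fin 2) (Fin 2) ℂ))
      + Real.cos (2*θ) • ((1 : Matrix (Fin 2) (Fin 2) ℂ) ⊗ₖ σ₃)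
      + (p * Real.sin (2*θ)) • (σ₁ ⊗ₖ σ₁)
      - (p * Real.sin (2*θ)) • (σ₂ ⊗ₖ σ₂)
      + p • (σ₃ ⊗ₖ σ₃))

theorem corrMatrix_oneWayState (p θ : ℝ) :
    corrMatrix (oneWayState p θ) = diagonal ![p * Real.sin (2*θ), -(p * Real.sin (2*θ)), p] := by
  unfold oneWayState
  generalize Real.cos (2*θ) = c
  generalize Real.sin (2*θ) = s
  ext i j
  fin_cases i <;> fin_cases j <;>
    simp [corrMatrix, pauli, σ₁, σ₂, σ₃, Matrix.trace, Matrix.mul_apply, Fintype.sum_prod_type,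
      Fin.sum_univ_two, Matrix.one_apply] <;> ring

section matVec

variable (T : Matrix (Fin 3) (Fin 3) ℝ)

theorem inner_matVec (a b : EuclideanSpace ℝ (Fin 3)) :
    inner ℝ a (matVec T b) = ∑ i, ∑ j, a i * T i j * b j := by
  simp [matVec, PiLp.inner_apply, mulVec, dotProduct, Finset.mul_sum, mul_comm, mul_left_comm,
    mul_assoc]

theorem matVec_add (u v : EuclideanSpace ℝ (Fin 3)) :
    matVec T (u + v) = matVec T u + matVec T v := by
  simp [matVec, mulVec_add]

theorem matVec_sub (u v : EuclideanSpace ℝ (Fin 3)) :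
    matVec T (u - v) = matVec T u - matVec T v := by
  simp [matVec, mulVec_sub]

theorem matVec_diagonal_apply (d : Fin 3 → ℝ) (v : EuclideanSpace ℝ (Fin 3)) (i : Fin 3) :
    matVec (diagonal d) v i = d i * v i := by
  simp [matVec, mulVec_diagonal]

end matVec

section CHSH

variable (ρ : Matrix (Fin 2 × Fin 2) (Fin 2 × Fin 2) ℂ)

theorem corrE_eq_inner_matVec (a b : EuclideanSpace ℝ (Fin 3)) :
    corrE ρ a b = inner ℝ a (matVec (corrMatrix ρ) b) := by
  rw [inner_matVec]
  simp only [corrE, corrMatrix, pauliVec, pauli, add_kronecker, kronecker_add, smul_kronecker,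
    kronecker_smul, Matrix.mul_add, Matrix.mul_smul, trace_add, trace_smul, Complex.add_re,
    smul_eq_mul, Complex.re_ofReal_mul, Fin.sum_univ_three, cons_val_zero, cons_val_one,
    cons_val_two, head_cons, tail_cons]
  ring

theorem CHSHval_eq_inner_matVec (a1 a2 b1 b2 : EuclideanSpace ℝ (Fin 3)) :
    CHSHval ρ a1 a2 b1 b2 = inner ℝ a1 (matVec (corrMatrix ρ) (b1 + b2))
      + inner ℝ a2 (matVec (corrMatrix ρ) (b1 - b2)) := by
  simp only [CHSHval, corrE_eq_inner_matVec, matVec_add, matVec_sub, inner_add_right,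
    inner_sub_right]
  ring

theorem CHSHval_le_norm_add_norm {a1 a2 : EuclideanSpace ℝ (Fin 3)} (ha1 : ‖a1‖ = 1)
    (ha2 : ‖a2‖ = 1) (b1 b2 : EuclideanSpace ℝ (Fin 3)) :
    CHSHval ρ a1 a2 b1 b2
      ≤ ‖matVec (corrMatrix ρ) (b1 + b2)‖ + ‖matVec (corrMatrix ρ) (b1 - b2)‖ := by
  rw [CHSHval_eq_inner_matVec]
  gcongr
  · simpa [ha1] using real_inner_le_norm a1 (matVec (corrMatrix ρ) (b1 + b2))
  · simpa [ha2] using real_inner_le_norm a2 (matVec (corrMatrix ρ) (b1 - b2))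

end CHSH

/-- Cauchy–Schwarz for `x + y = √U (x / √U) + √V (y / √V)`, written without division so that
`U = 0` or `V = 0` is allowed. -/
theorem add_le_sqrt_mul_sqrt_of_sq_mul_add_sq_mul_le {x y U V k : ℝ} (hx : 0 ≤ x) (hy : 0 ≤ y)
    (hU : 0 ≤ U) (hV : 0 ≤ V) (hxU : x ^ 2 ≤ k * U) (hyV : y ^ 2 ≤ k * V)
    (hmix : x ^ 2 * V + y ^ 2 * U ≤ k * U * V) :
    x + y ≤ √k * √(U + V) := by
  rw [← Real.sqrt_mul' _ (add_nonneg hU hV), Real.le_sqrt (add_nonneg hx hy) (by nlinarith)]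
  rcases hU.eq_or_lt with rfl | hU
  · nlinarith
  rcases hV.eq_or_lt with rfl | hV
  · nlinarith
  refine le_of_mul_le_mul_right ?_ (mul_pos hU hV)
  nlinarith [sq_nonneg (x * V - y * U)]

theorem sq_apply_le_norm_sq {ι : Type*} [Fintype ι] (u : EuclideanSpace ℝ ι) (i : ι) :
    u i ^ 2 ≤ ‖u‖ ^ 2 := by
  simpa using pow_le_pow_left₀ (norm_nonneg _) (PiLp.norm_apply_le u i) 2

theorem norm_sq_eq_sum_three (u : EuclideanSpace ℝ (Fin 3)) :
    ‖u‖ ^ 2 = u 0 ^ 2 + u 1 ^ 2 + u 2 ^ 2 := by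
  simp [EuclideanSpace.norm_sq_eq, Fin.sum_univ_three]

theorem norm_eq_one_of_sq_add_sq_add_sq {x y z : ℝ} (h : x ^ 2 + y ^ 2 + z ^ 2 = 1) :
    ‖!₂[x, y, z]‖ = 1 := by
  rw [← Real.sqrt_sq (norm_nonneg _), norm_sq_eq_sum_three]
  simpa using h

theorem sq_apply_two_mul_add_le_of_inner_eq_zero {u v : EuclideanSpace ℝ (Fin 3)}
    (huv : inner ℝ u v = 0) :
    u 2 ^ 2 * ‖v‖ ^ 2 + v 2 ^ 2 * ‖u‖ ^ 2 ≤ ‖u‖ ^ 2 * ‖v‖ ^ 2 := by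
  simp only [PiLp.inner_apply, Fin.sum_univ_three, RCLike.inner_apply, conj_trivial] at huv
  rw [norm_sq_eq_sum_three, norm_sq_eq_sum_three]
  have h01 : (u 0 * v 0 + u 1 * v 1) ^ 2 = (u 2 * v 2) ^ 2 := by
    rw [show u 0 * v 0 + u 1 * v 1 = -(u 2 * v 2) by linarith]; ring
  nlinarith [sq_nonneg (u 0 * v 1 - u 1 * v 0)]

theorem norm_matVec_diagonal_sq (s t : ℝ) (u : EuclideanSpace ℝ (Fin 3)) :
    ‖matVec (diagonal ![s, -s, t]) u‖ ^ 2 = s ^ 2 * ‖u‖ ^ 2 + (t ^ 2 - s ^ 2) * u 2 ^ 2 := by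
  simp only [norm_sq_eq_sum_three, matVec_diagonal_apply, cons_val_zero, cons_val_one, cons_val]
  ring

theorem norm_matVec_diagonal_add_le {s t : ℝ} (hst : s ^ 2 ≤ t ^ 2)
    {u v : EuclideanSpace ℝ (Fin 3)} (huv : inner ℝ u v = 0) :
    ‖matVec (diagonal ![s, -s, t]) u‖ + ‖matVec (diagonal ![s, -s, t]) v‖
      ≤ √(s ^ 2 + t ^ 2) * √(‖u‖ ^ 2 + ‖v‖ ^ 2) := by
  have hu := sq_apply_le_norm_sq u 2
  have hv := sq_apply_le_norm_sq v 2
  have hbessel := sq_apply_two_mul_add_le_of_inner_eq_zero huv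
  have hts : 0 ≤ t ^ 2 - s ^ 2 := sub_nonneg.2 hst
  apply add_le_sqrt_mul_sqrt_of_sq_mul_add_sq_mul_le (norm_nonneg _) (norm_nonneg _)
    (sq_nonneg _) (sq_nonneg _) <;> simp only [norm_matVec_diagonal_sq]
  · nlinarith [sq_nonneg s, sq_nonneg ‖u‖]
  · nlinarith [sq_nonneg s, sq_nonneg ‖v‖]
  · nlinarith [mul_le_mul_of_nonneg_left hbessel hts]

section diagonal

variable {s t : ℝ} {ρ : Matrix (Fin 2 × Fin 2) (Fin 2 × Fin 2) ℂ}

theorem CHSHval_le_of_corrMatrix_eq_diagonal (hT : corrMatrix ρ = diagonal ![s, -s, t])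
    (hst : s ^ 2 ≤ t ^ 2)
    {a1 a2 b1 b2 : EuclideanSpace ℝ (Fin 3)} (ha1 : ‖a1‖ = 1) (ha2 : ‖a2‖ = 1)
    (hb1 : ‖b1‖ = 1) (hb2 : ‖b2‖ = 1) :
    CHSHval ρ a1 a2 b1 b2 ≤ 2 * √(s ^ 2 + t ^ 2) := by
  have horth : inner ℝ (b1 + b2) (b1 - b2) = 0 :=
    (real_inner_add_sub_eq_zero_iff b1 b2).2 (hb1.trans hb2.symm)
  have hpar : ‖b1 + b2‖ ^ 2 + ‖b1 - b2‖ ^ 2 = 2 ^ 2 := by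
    have := parallelogram_law_with_norm ℝ b1 b2
    rw [hb1, hb2] at this
    linarith
  calc CHSHval ρ a1 a2 b1 b2
      ≤ ‖matVec (corrMatrix ρ) (b1 + b2)‖ + ‖matVec (corrMatrix ρ) (b1 - b2)‖ :=
        CHSHval_le_norm_add_norm ρ ha1 ha2 b1 b2
    _ ≤ √(s ^ 2 + t ^ 2) * √(‖b1 + b2‖ ^ 2 + ‖b1 - b2‖ ^ 2) := by
        rw [hT]; exact norm_matVec_diagonal_add_le hst horth
    _ = 2 * √(s ^ 2 + t ^ 2) := by rw [hpar, Real.sqrt_sq zero_le_two, mul_comm]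

theorem exists_CHSHval_eq_of_corrMatrix_eq_diagonal (hT : corrMatrix ρ = diagonal ![s, -s, t])
    (hst : 0 < s ^ 2 + t ^ 2) :
    ∃ a1 a2 b1 b2 : EuclideanSpace ℝ (Fin 3), ‖a1‖ = 1 ∧ ‖a2‖ = 1 ∧ ‖b1‖ = 1 ∧ ‖b2‖ = 1 ∧
      CHSHval ρ a1 a2 b1 b2 = 2 * √(s ^ 2 + t ^ 2) := by
  set c := √(s ^ 2 + t ^ 2)
  have hc : 0 < c := Real.sqrt_pos.2 hst
  have hc2 : c ^ 2 = s ^ 2 + t ^ 2 := Real.sq_sqrt hst.le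
  have hb : (s / c) ^ 2 + 0 ^ 2 + (t / c) ^ 2 = 1 := by field_simp; linarith
  refine ⟨!₂[1, 0, 0], !₂[0, 0, 1], !₂[s / c, 0, t / c], !₂[s / c, 0, -(t / c)],
    norm_eq_one_of_sq_add_sq_add_sq (by norm_num), norm_eq_one_of_sq_add_sq_add_sq (by norm_num),
    norm_eq_one_of_sq_add_sq_add_sq hb, norm_eq_one_of_sq_add_sq_add_sq (by linarith [hb]), ?_⟩
  rw [CHSHval_eq_inner_matVec, hT]
  simp only [PiLp.inner_apply, RCLike.inner_apply, conj_trivial, Fin.sum_univ_three,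
    matVec_diagonal_apply, PiLp.add_apply, PiLp.sub_apply, cons_val_zero, cons_val_one, cons_val]
  field_simp
  linarith

end diagonal

theorem one_way_chsh_iff_general (p θ : ℝ)
    (ρ : Matrix (Fin 2 × Fin 2) (Fin 2 × Fin 2) ℂ)
    (hρ : ρ = (1/4 : ℝ) • ((1 : Matrix (Fin 2 × Fin 2) (Fin 2 × Fin 2) ℂ)
      + (p * Real.cos (2*θ)) • (σ₃ ⊗ₖ (1 : Matrix (Fin 2) (Fin 2) ℂ))
      + Real.cos (2*θ) • ((1 : Matrix (Fin 2) (Fin 2) ℂ) ⊗ₖ σ₃)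
      + (p * Real.sin (2*θ)) • (σ₁ ⊗ₖ σ₁)
      - (p * Real.sin (2*θ)) • (σ₂ ⊗ₖ σ₂)
      + p • (σ₃ ⊗ₖ σ₃))) :
    (∃ a1 a2 b1 b2 : EuclideanSpace ℝ (Fin 3),
      ‖a1‖ = 1 ∧ ‖a2‖ = 1 ∧ ‖b1‖ = 1 ∧ ‖b2‖ = 1 ∧ 2 < CHSHval ρ a1 a2 b1 b2) ↔
    1 < p ^ 2 * (1 + Real.sin (2*θ) ^ 2) := by
  have hT : corrMatrix ρ = diagonal ![p * Real.sin (2*θ), -(p * Real.sin (2*θ)), p] := by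
    rw [hρ]; exact corrMatrix_oneWayState p θ
  have hst : (p * Real.sin (2*θ)) ^ 2 ≤ p ^ 2 := by
    rw [mul_pow]; exact mul_le_of_le_one_right (sq_nonneg p) (Real.sin_sq_le_one _)
  have hsum : (p * Real.sin (2*θ)) ^ 2 + p ^ 2 = p ^ 2 * (1 + Real.sin (2*θ) ^ 2) := by ring
  have two_lt_two_mul_sqrt (x : ℝ) : 2 < 2 * √x ↔ 1 < x := by
    simpa using Real.lt_sqrt (x := 1) (y := x) zero_le_one
  rw [← hsum]
  constructor
  · rintro ⟨a1, a2, b1, b2, ha1, ha2, hb1, hb2, hCHSH⟩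
    exact (two_lt_two_mul_sqrt _).1 <|
      hCHSH.trans_le (CHSHval_le_of_corrMatrix_eq_diagonal hT hst ha1 ha2 hb1 hb2)
  · intro h
    obtain ⟨a1, a2, b1, b2, ha1, ha2, hb1, hb2, hCHSH⟩ :=
      exists_CHSHval_eq_of_corrMatrix_eq_diagonal hT (by linarith)
    exact ⟨a1, a2, b1, b2, ha1, ha2, hb1, hb2, hCHSH ▸ (two_lt_two_mul_sqrt _).2 h⟩

/-- the state
`ρ(p,θ) = (1/4)(I₄ + p cos 2θ σ3⊗I₂ + cos 2θ I₂⊗σ3 + p sin 2θ σ1⊗σ1 − p sin 2θ σ2⊗σ2 + p σ3⊗σ3)`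
has a CHSH value exceeding 2 for some unit measurement vectors iff `p²(1+sin² 2θ) > 1`. -/
theorem one_way_chsh_iff (p θ : ℝ) (hp0 : 0 ≤ p) (hp1 : p ≤ 1)
    (ρ : Matrix (Fin 2 × Fin 2) (Fin 2 × Fin 2) ℂ)
    (hρ : ρ = (1/4 : ℝ) • ((1 : Matrix (Fin 2 × Fin 2) (Fin 2 × Fin 2) ℂ)
      + (p * Real.cos (2*θ)) • (σ₃ ⊗ₖ (1 : Matrix (Fin 2) (Fin 2) ℂ))
      + Real.cos (2*θ) • ((1 : Matrix (Fin 2) (Fin 2) ℂ) ⊗ₖ σ₃)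
      + (p * Real.sin (2*θ)) • (σ₁ ⊗ₖ σ₁)
      - (p * Real.sin (2*θ)) • (σ₂ ⊗ₖ σ₂)
      + p • (σ₃ ⊗ₖ σ₃))) :
    (∃ a1 a2 b1 b2 : EuclideanSpace ℝ (Fin 3),
      ‖a1‖ = 1 ∧ ‖a2‖ = 1 ∧ ‖b1‖ = 1 ∧ ‖b2‖ = 1 ∧ 2 < CHSHval ρ a1 a2 b1 b2) ↔
    1 < p ^ 2 * (1 + Real.sin (2*θ) ^ 2) :=
  one_way_chsh_iff_general p θ ρ hρ

end
end

section
/- For p ∈ [0,1] and θ ∈ ℝ, let ϱ := (1/4)·(I₄ + p·cos(2θ)·(σ3 ⊗ₖ I₂) + cos²θ·(I₂ ⊗ₖ σ3) + p·sin θ·cos θ·(σ1 ⊗ₖ σ1) − p·sin θ·cos θ·(σ2 ⊗ₖ σ2) + p·cos²θ·(σ3 ⊗ₖ σ3)). Then for every quadruple of unit vectors a1, a2, b1, b2 in EuclideanSpace ℝ (Fin 3), the CHSH value of ϱ at (a1,a2,b1,b2) is at most 2; that is, ϱ can never generate a CHSH violation with projective measurements. -/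
open Matrix Polynomial
open scoped Kronecker Matrix ComplexOrder

noncomputable section

/-! The correlation matrix of `ϱ` is `T = diag(α, -α, β)` with `α = p sin θ cos θ` and
`β = p cos² θ`, so `E(a, b) = ⟪a, T b⟫` and the CHSH value is at most
`‖T (b1 + b2)‖ + ‖T (b1 - b2)‖`, where `b1 ± b2` are orthogonal with squared norms summing to `4`.
As in the Horodecki criterion, this is at most `2` once `‖T e‖² + ‖T f‖² ≤ 1` for all orthonormal
`e, f`; for a diagonal `T` this holds when the squares of any two diagonal entries sum to at most
`1`, which here reads `2α² ≤ 1` and `α² + β² ≤ 1`. -/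

open scoped RealInnerProductSpace

theorem add_le_two_of_sq_mul_add_sq_mul_le {x y r s : ℝ} (hx : 0 ≤ x) (hy : 0 ≤ y)
    (hxr : x ≤ r) (hys : y ≤ s) (h : x ^ 2 * s ^ 2 + y ^ 2 * r ^ 2 ≤ r ^ 2 * s ^ 2)
    (hrs : r ^ 2 + s ^ 2 = 4) : x + y ≤ 2 := by
  rcases (hx.trans hxr).eq_or_lt with rfl | hr
  · nlinarith
  rcases (hy.trans hys).eq_or_lt with rfl | hs
  · nlinarith
  have cauchy : (x + y) ^ 2 * (r ^ 2 * s ^ 2)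
      ≤ (x ^ 2 * s ^ 2 + y ^ 2 * r ^ 2) * (r ^ 2 + s ^ 2) := by
    nlinarith [sq_nonneg (x * s ^ 2 - y * r ^ 2)]
  rw [hrs] at cauchy
  have hsq : (x + y) ^ 2 * (r ^ 2 * s ^ 2) ≤ 2 ^ 2 * (r ^ 2 * s ^ 2) := by linarith
  exact (pow_le_pow_iff_left₀ (by positivity) (by norm_num) two_ne_zero).1
    (le_of_mul_le_mul_right hsq (by positivity))

theorem sum_mul_le_of_add_le_one (l w : Fin 3 → ℝ) (t : ℝ) (hw : ∀ i, w i ≤ t)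
    (hsum : ∑ i, w i = 2 * t) (hl : ∀ i j, i ≠ j → l i + l j ≤ 1) : ∑ i, l i * w i ≤ t := by
  simp only [Fin.sum_univ_three] at hsum ⊢
  -- `t - ∑ l i * w i = ∑ (t - w i) * (1 - l j - l k)`, `{i, j, k} = {0, 1, 2}`
  linear_combination (l 0 + l 1 + l 2 - 1) * hsum +
    mul_le_mul_of_nonneg_left (hl 1 2 (by decide)) (sub_nonneg.2 (hw 0)) +
    mul_le_mul_of_nonneg_left (hl 0 2 (by decide)) (sub_nonneg.2 (hw 1)) +
    mul_le_mul_of_nonneg_left (hl 0 1 (by decide)) (sub_nonneg.2 (hw 2))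

section CHSH

variable {E F : Type*} [NormedAddCommGroup E] [InnerProductSpace ℝ E]
  [NormedAddCommGroup F] [InnerProductSpace ℝ F]

theorem chsh_le_norm_add_norm (T : F →ₗ[ℝ] E) {a1 a2 : E} (ha1 : ‖a1‖ ≤ 1) (ha2 : ‖a2‖ ≤ 1)
    (b1 b2 : F) :
    ⟪a1, T b1⟫ + ⟪a2, T b1⟫ + ⟪a1, T b2⟫ - ⟪a2, T b2⟫ ≤ ‖T (b1 + b2)‖ + ‖T (b1 - b2)‖ := by
  have hsplit : ⟪a1, T b1⟫ + ⟪a2, T b1⟫ + ⟪a1, T b2⟫ - ⟪a2, T b2⟫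
      = ⟪a1, T (b1 + b2)⟫ + ⟪a2, T (b1 - b2)⟫ := by
    simp only [map_add, map_sub, inner_add_right, inner_sub_right]
    ring
  rw [hsplit]
  gcongr
  · exact (real_inner_le_norm _ _).trans (mul_le_of_le_one_left (norm_nonneg _) ha1)
  · exact (real_inner_le_norm _ _).trans (mul_le_of_le_one_left (norm_nonneg _) ha2)

/-- `hT₂` is Horodecki's condition `‖T e‖² + ‖T f‖² ≤ 1` for orthonormal `e, f`, cleared of
denominators. -/
theorem chsh_le_two (T : F →ₗ[ℝ] E) (hT : ∀ u, ‖T u‖ ≤ ‖u‖)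
    (hT₂ : ∀ u v, ⟪u, v⟫ = 0 → ‖T u‖ ^ 2 * ‖v‖ ^ 2 + ‖T v‖ ^ 2 * ‖u‖ ^ 2 ≤ ‖u‖ ^ 2 * ‖v‖ ^ 2)
    {a1 a2 : E} (ha1 : ‖a1‖ ≤ 1) (ha2 : ‖a2‖ ≤ 1) {b1 b2 : F} (hb1 : ‖b1‖ = 1)
    (hb2 : ‖b2‖ = 1) :
    ⟪a1, T b1⟫ + ⟪a2, T b1⟫ + ⟪a1, T b2⟫ - ⟪a2, T b2⟫ ≤ 2 := by
  have horth : ⟪b1 + b2, b1 - b2⟫ = 0 :=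
    (real_inner_add_sub_eq_zero_iff b1 b2).2 (hb1.trans hb2.symm)
  have hpar : ‖b1 + b2‖ ^ 2 + ‖b1 - b2‖ ^ 2 = 4 := by
    have := parallelogram_law_with_norm ℝ b1 b2
    rw [hb1, hb2] at this
    nlinarith
  exact (chsh_le_norm_add_norm T ha1 ha2 b1 b2).trans <|
    add_le_two_of_sq_mul_add_sq_mul_le (norm_nonneg _) (norm_nonneg _) (hT _) (hT _)
      (hT₂ _ _ horth) hpar

end CHSH

section Diagonal

variable {n : Type*} [Fintype n] [DecidableEq n]

theorem toLpLin_diagonal_apply (d : n → ℝ) (u : EuclideanSpace ℝ n) (i : n) :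
    toLpLin 2 2 (diagonal d) u i = d i * u i := by
  simp [toLpLin_apply, mulVec_diagonal]

theorem norm_sq_toLpLin_diagonal (d : n → ℝ) (u : EuclideanSpace ℝ n) :
    ‖toLpLin 2 2 (diagonal d) u‖ ^ 2 = ∑ i, d i ^ 2 * u i ^ 2 := by
  simp only [EuclideanSpace.real_norm_sq_eq, toLpLin_diagonal_apply, mul_pow]

theorem norm_toLpLin_diagonal_le {d : n → ℝ} (hd : ∀ i, d i ^ 2 ≤ 1) (u : EuclideanSpace ℝ n) :
    ‖toLpLin 2 2 (diagonal d) u‖ ≤ ‖u‖ := by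
  refine (pow_le_pow_iff_left₀ (norm_nonneg _) (norm_nonneg _) two_ne_zero).1 ?_
  rw [norm_sq_toLpLin_diagonal, EuclideanSpace.real_norm_sq_eq]
  exact Finset.sum_le_sum fun i _ => mul_le_of_le_one_left (sq_nonneg _) (hd i)

end Diagonal

theorem sq_mul_add_sq_mul_le_of_inner_eq_zero {u v : EuclideanSpace ℝ (Fin 3)}
    (huv : ⟪u, v⟫ = 0) (i : Fin 3) :
    u i ^ 2 * ‖v‖ ^ 2 + v i ^ 2 * ‖u‖ ^ 2 ≤ ‖u‖ ^ 2 * ‖v‖ ^ 2 := by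
  simp only [EuclideanSpace.real_norm_sq_eq, Fin.sum_univ_three]
  simp only [PiLp.inner_apply, Fin.sum_univ_three, RCLike.inner_apply, conj_trivial] at huv
  -- Lagrange's identity: given `⟪u, v⟫ = 0`, the slack for `i = 0` is `(u 1 * v 2 - u 2 * v 1) ^ 2`
  fin_cases i <;> simp
  · linear_combination (v 0 * u 0 - v 1 * u 1 - v 2 * u 2) * huv + sq_nonneg (u 1 * v 2 - u 2 * v 1)
  · linear_combination (v 1 * u 1 - v 0 * u 0 - v 2 * u 2) * huv + sq_nonneg (u 0 * v 2 - u 2 * v 0)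
  · linear_combination (v 2 * u 2 - v 0 * u 0 - v 1 * u 1) * huv + sq_nonneg (u 0 * v 1 - u 1 * v 0)

theorem norm_sq_toLpLin_diagonal_mul_add_le {d : Fin 3 → ℝ}
    (hd : ∀ i j, i ≠ j → d i ^ 2 + d j ^ 2 ≤ 1) {u v : EuclideanSpace ℝ (Fin 3)}
    (huv : ⟪u, v⟫ = 0) :
    ‖toLpLin 2 2 (diagonal d) u‖ ^ 2 * ‖v‖ ^ 2 + ‖toLpLin 2 2 (diagonal d) v‖ ^ 2 * ‖u‖ ^ 2
      ≤ ‖u‖ ^ 2 * ‖v‖ ^ 2 := by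
  have hsum : ∑ i, (u i ^ 2 * ‖v‖ ^ 2 + v i ^ 2 * ‖u‖ ^ 2) = 2 * (‖u‖ ^ 2 * ‖v‖ ^ 2) := by
    rw [Finset.sum_add_distrib, ← Finset.sum_mul, ← Finset.sum_mul,
      ← EuclideanSpace.real_norm_sq_eq, ← EuclideanSpace.real_norm_sq_eq]
    ring
  convert sum_mul_le_of_add_le_one (fun i => d i ^ 2) _ _
    (sq_mul_add_sq_mul_le_of_inner_eq_zero huv) hsum hd using 1
  simp only [norm_sq_toLpLin_diagonal, Finset.sum_mul, ← Finset.sum_add_distrib]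
  congr 1 with i
  ring

theorem chsh_le_two_of_diagonal {d : Fin 3 → ℝ} (hd : ∀ i j, i ≠ j → d i ^ 2 + d j ^ 2 ≤ 1)
    {a1 a2 b1 b2 : EuclideanSpace ℝ (Fin 3)} (ha1 : ‖a1‖ ≤ 1) (ha2 : ‖a2‖ ≤ 1)
    (hb1 : ‖b1‖ = 1) (hb2 : ‖b2‖ = 1) :
    ⟪a1, toLpLin 2 2 (diagonal d) b1⟫ + ⟪a2, toLpLin 2 2 (diagonal d) b1⟫
      + ⟪a1, toLpLin 2 2 (diagonal d) b2⟫ - ⟪a2, toLpLin 2 2 (diagonal d) b2⟫ ≤ 2 := by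
  have hd₁ (i : Fin 3) : d i ^ 2 ≤ 1 := by
    obtain ⟨j, hj⟩ := exists_ne i
    exact le_of_add_le_of_nonneg_left (hd i j hj.symm) (sq_nonneg _)
  exact chsh_le_two _ (norm_toLpLin_diagonal_le hd₁)
    (fun _ _ => norm_sq_toLpLin_diagonal_mul_add_le hd) ha1 ha2 hb1 hb2

theorem corrE_eq_inner (ρ : Matrix (Fin 2 × Fin 2) (Fin 2 × Fin 2) ℂ)
    (a b : EuclideanSpace ℝ (Fin 3)) : corrE ρ a b = ⟪a, toLpLin 2 2 (corrMatrix ρ) b⟫ := by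
  simp only [corrE, pauliVec, add_kronecker, kronecker_add, smul_kronecker, kronecker_smul,
    mul_add, Matrix.mul_smul, trace_add, trace_smul, Complex.add_re, smul_eq_mul,
    Complex.re_ofReal_mul]
  simp [toLpLin_apply, PiLp.inner_apply, mulVec, dotProduct, corrMatrix, pauli, Fin.sum_univ_three]
  ring

def povmState (p θ : ℝ) : Matrix (Fin 2 × Fin 2) (Fin 2 × Fin 2) ℂ :=
  (1/4 : ℝ) • ((1 : Matrix (Fin 2 × Fin 2) (Fin 2 × Fin 2) ℂ)
      + (p * Real.cos (2*θ)) • (σ₃ ⊗ₖ (1 : Matrix (Fin 2) (Fin 2) ℂ))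
      + (Real.cos θ ^ 2) • ((1 : Matrix (Fin 2) (Fin 2) ℂ) ⊗ₖ σ₃)
      + (p * Real.sin θ * Real.cos θ) • (σ₁ ⊗ₖ σ₁)
      - (p * Real.sin θ * Real.cos θ) • (σ₂ ⊗ₖ σ₂)
      + (p * Real.cos θ ^ 2) • (σ₃ ⊗ₖ σ₃))

def povmStateCorr (p θ : ℝ) : Fin 3 → ℝ :=
  ![p * Real.sin θ * Real.cos θ, -(p * Real.sin θ * Real.cos θ), p * Real.cos θ ^ 2]

theorem corrMatrix_povmState (p θ : ℝ) :
    corrMatrix (povmState p θ) = diagonal (povmStateCorr p θ) := by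
  ext i j
  fin_cases i <;> fin_cases j <;>
  simp [corrMatrix, povmState, povmStateCorr, pauli, σ₁, σ₂, σ₃, trace, Fintype.sum_prod_type,
    mul_apply, one_apply, -Complex.ofReal_cos, -Complex.ofReal_sin, -Complex.ofReal_pow] <;> ring

theorem povmStateCorr_sq_add_sq_le_one {p : ℝ} (hp0 : 0 ≤ p) (hp1 : p ≤ 1) (θ : ℝ) (i j : Fin 3)
    (hij : i ≠ j) : povmStateCorr p θ i ^ 2 + povmStateCorr p θ j ^ 2 ≤ 1 := by
  have hsc := Real.sin_sq_add_cos_sq θ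
  have hp : p ^ 2 ≤ 1 := by nlinarith
  have hαα : 2 * (p * Real.sin θ * Real.cos θ) ^ 2 ≤ 1 := by
    nlinarith [sq_nonneg (Real.sin θ ^ 2 - Real.cos θ ^ 2),
      mul_le_of_le_one_left (sq_nonneg (Real.sin θ * Real.cos θ)) hp]
  have hαβ : (p * Real.sin θ * Real.cos θ) ^ 2 + (p * Real.cos θ ^ 2) ^ 2 ≤ 1 := by
    nlinarith [mul_le_of_le_one_left (sq_nonneg (Real.cos θ)) hp, Real.cos_sq_le_one θ]
  fin_cases i <;> fin_cases j <;> simp [povmStateCorr] at hij ⊢ <;> linarith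

/-- the state
`ϱ = (1/4)(I₄ + p cos 2θ σ3⊗I₂ + cos²θ I₂⊗σ3 + p sinθ cosθ σ1⊗σ1 − p sinθ cosθ σ2⊗σ2 + p cos²θ σ3⊗σ3)`
never violates the CHSH inequality with projective measurements. -/
theorem povm_state_no_chsh (p θ : ℝ) (hp0 : 0 ≤ p) (hp1 : p ≤ 1)
    (ϱ : Matrix (Fin 2 × Fin 2) (Fin 2 × Fin 2) ℂ)
    (hϱ : ϱ = (1/4 : ℝ) • ((1 : Matrix (Fin 2 × Fin 2) (Fin 2 × Fin 2) ℂ)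
      + (p * Real.cos (2*θ)) • (σ₃ ⊗ₖ (1 : Matrix (Fin 2) (Fin 2) ℂ))
      + (Real.cos θ ^ 2) • ((1 : Matrix (Fin 2) (Fin 2) ℂ) ⊗ₖ σ₃)
      + (p * Real.sin θ * Real.cos θ) • (σ₁ ⊗ₖ σ₁)
      - (p * Real.sin θ * Real.cos θ) • (σ₂ ⊗ₖ σ₂)
      + (p * Real.cos θ ^ 2) • (σ₃ ⊗ₖ σ₃))) :
    ∀ a1 a2 b1 b2 : EuclideanSpace ℝ (Fin 3),
      ‖a1‖ = 1 → ‖a2‖ = 1 → ‖b1‖ = 1 → ‖b2‖ = 1 →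
      CHSHval ϱ a1 a2 b1 b2 ≤ 2 := by
  intro a1 a2 b1 b2 ha1 ha2 hb1 hb2
  subst hϱ
  change CHSHval (povmState p θ) a1 a2 b1 b2 ≤ 2
  simp only [CHSHval, corrE_eq_inner, corrMatrix_povmState]
  exact chsh_le_two_of_diagonal (povmStateCorr_sq_add_sq_le_one hp0 hp1 θ) ha1.le ha2.le hb1 hb2

end
end
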